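/- Let (S, A, n, u) be an organizer. Then every internal transformation lies on some directed cycle of the system graph of A. -/

import Mathlib

/-!
Weight the edge `j → i` of the system graph by `A0 i j * n j * u i` and the edge `i → j` by
`A1 i j * n j * u i`. The two organizer equations say exactly that this is a circulation:
conservation at a transformation is `A0 n = A1 n`, at an entity it is `A0ᵀ u = A1ᵀ u`. Every
internal transformation carries an edge of positive weight, and in a circulation every such
edge lies on a cycle: the set `R` of vertices reachable from its head has no outgoing weight,
hence by conservation no incoming weight, so the tail of the edge lies in `R`.
-/

open Finset

/-- The system graph of a subsystem `(A0, A1)`: edges `j → i` when `A0 i j > 0`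
and `i → j` when `A1 i j > 0`. -/
def sysStep {T E : Type*} (A0 A1 : T → E → ℕ) : (E ⊕ T) → (E ⊕ T) → Prop
  | Sum.inl j, Sum.inr i => 0 < A0 i j
  | Sum.inr i, Sum.inl j => 0 < A1 i j
  | _, _ => False

section Circulation

variable {V M : Type*} [Fintype V] [AddCommMonoid M] [PartialOrder M] [CanonicallyOrderedAdd M]

def IsCirculation (w : V → V → M) : Prop :=
  ∀ v, ∑ y, w v y = ∑ x, w x v

namespace IsCirculation

variable [IsLeftCancelAdd M] {w : V → V → M}

theorem inflow_eq_zero_of_outflow_eq_zero (hw : IsCirculation w)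
    {R : Set V} (hout : ∀ x ∈ R, ∀ y ∉ R, w x y = 0) :
    ∀ x ∈ R, ∀ z ∉ R, w z x = 0 := by
  classical
  set F : Finset V := R.toFinset
  have hout' : ∀ x ∈ F, ∑ y ∈ Fᶜ, w x y = 0 := fun x hx =>
    sum_eq_zero fun y hy => hout x (by simpa [F] using hx) y (by simpa [F] using hy)
  -- Total outflow of `F` equals its total inflow, and the edges inside `F` count on both sides.
  have hsplit : ∑ x ∈ F, ∑ y ∈ F, w x y
      = ∑ x ∈ F, ∑ y ∈ F, w x y + ∑ x ∈ F, ∑ z ∈ Fᶜ, w z x := by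
    calc ∑ x ∈ F, ∑ y ∈ F, w x y = ∑ x ∈ F, ∑ y, w x y :=
          sum_congr rfl fun x hx => by rw [← sum_add_sum_compl F, hout' x hx, add_zero]
      _ = ∑ x ∈ F, ∑ z, w z x := sum_congr rfl fun x _ => hw x
      _ = ∑ x ∈ F, ∑ z ∈ F, w z x + ∑ x ∈ F, ∑ z ∈ Fᶜ, w z x := by
          rw [← sum_add_distrib]
          exact sum_congr rfl fun x _ => (sum_add_sum_compl F _).symm
      _ = _ := by rw [sum_comm]
  intro x hx z hz
  have hin := sum_eq_zero_iff.mp (left_eq_add.mp hsplit) x (by simpa [F] using hx)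
  exact sum_eq_zero_iff.mp hin z (by simpa [F] using hz)

theorem transGen_self_of_pos_inflow (hw : IsCirculation w) {r s : V}
    (hrs : 0 < w r s) : Relation.TransGen (fun a b => 0 < w a b) s s := by
  set R : Set V := {x | Relation.ReflTransGen (fun a b => 0 < w a b) s x}
  have hout : ∀ x ∈ R, ∀ y ∉ R, w x y = 0 := fun x hx y hy => by
    by_contra hxy
    exact hy (hx.tail (pos_iff_ne_zero.mpr hxy))
  have hr : r ∈ R := by
    by_contra hr
    exact hrs.ne' (hw.inflow_eq_zero_of_outflow_eq_zero hout s Relation.ReflTransGen.refl r hr)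
  exact Relation.TransGen.tail' hr hrs

theorem transGen_self_of_pos_outflow (hw : IsCirculation w) {s t : V}
    (hst : 0 < w s t) : Relation.TransGen (fun a b => 0 < w a b) s s := by
  have hin : 0 < ∑ r, w r s := by
    rw [← hw s]
    exact sum_pos_iff.mpr ⟨t, mem_univ t, hst⟩
  obtain ⟨r, -, hrs⟩ := sum_pos_iff.mp hin
  exact hw.transGen_self_of_pos_inflow hrs

end IsCirculation

end Circulation

section Organizer

variable {T E : Type*} (A0 A1 : T → E → ℕ) (n : E → ℕ) (u : T → ℕ)

def organizerFlow : (E ⊕ T) → (E ⊕ T) → ℕ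
  | Sum.inl j, Sum.inr i => A0 i j * n j * u i
  | Sum.inr i, Sum.inl j => A1 i j * n j * u i
  | _, _ => 0

theorem sysStep_of_organizerFlow_pos {a b : E ⊕ T} (h : 0 < organizerFlow A0 A1 n u a b) :
    sysStep A0 A1 a b := by
  rcases a with j | i <;> rcases b with j' | i' <;>
    simp only [organizerFlow, lt_irrefl, CanonicallyOrderedAdd.mul_pos] at h
  · exact h.1.1
  · exact h.1.1

variable {A0 A1 n u}

theorem isCirculation_organizerFlow [Fintype T] [Fintype E]
    (hcons : ∀ i, ∑ j, A0 i j * n j = ∑ j, A1 i j * n j)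
    (hcyc : ∀ j, ∑ i, A0 i j * u i = ∑ i, A1 i j * u i) :
    IsCirculation (organizerFlow A0 A1 n u) := by
  rintro (j | i) <;>
    simp only [Fintype.sum_sum_type, organizerFlow, sum_const_zero, zero_add, add_zero]
  · calc ∑ i, A0 i j * n j * u i = n j * ∑ i, A0 i j * u i := by
          rw [mul_sum]; exact sum_congr rfl fun i _ => by ring
      _ = n j * ∑ i, A1 i j * u i := by rw [hcyc j]
      _ = ∑ i, A1 i j * n j * u i := by
          rw [mul_sum]; exact sum_congr rfl fun i _ => by ring
  · rw [← sum_mul, ← sum_mul, hcons i]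

end Organizer

theorem stmt_4_general {T E : Type*} [Fintype T] [Fintype E]
    (A0 A1 : T → E → ℕ)
    (n : E → ℕ) (u : T → ℕ)
    (hnfull : ∀ j : E, (∃ i, 0 < A0 i j ∨ 0 < A1 i j) ↔ 0 < n j)
    (hufull : ∀ i : T, (∃ j, 0 < A0 i j ∨ 0 < A1 i j) ↔ 0 < u i)
    (hcons : ∀ i : T, ∑ j, A0 i j * n j = ∑ j, A1 i j * n j)
    (hcyc : ∀ j : E, ∑ i, A0 i j * u i = ∑ i, A1 i j * u i) :
    ∀ i : T, (∃ j, 0 < A0 i j ∨ 0 < A1 i j) →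
      Relation.TransGen (sysStep A0 A1) (Sum.inr i) (Sum.inr i) := by
  intro i hi
  have hcirc := isCirculation_organizerFlow hcons hcyc
  have hui : 0 < u i := (hufull i).mp hi
  obtain ⟨j, hj⟩ := hi
  have hnj : 0 < n j := (hnfull j).mp ⟨i, hj⟩
  refine Relation.TransGen.mono (fun a b => sysStep_of_organizerFlow_pos A0 A1 n u) _ _ ?_
  rcases hj with h0 | h1
  · exact hcirc.transGen_self_of_pos_inflow (r := Sum.inl j)
      (Nat.mul_pos (Nat.mul_pos h0 hnj) hui)
  · exact hcirc.transGen_self_of_pos_outflow (t := Sum.inl j)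
      (Nat.mul_pos (Nat.mul_pos h1 hnj) hui)

/-- In an organizer, every internal transformation lies on a directed cycle of the system graph. -/
theorem stmt_4 {T E : Type*} [Fintype T] [Fintype E]
    (S0 S1 A0 A1 : T → E → ℕ)
    (hA0 : ∀ i j, A0 i j ≤ S0 i j) (hA1 : ∀ i j, A1 i j ≤ S1 i j)
    (hAne : ∃ i j, 0 < A0 i j ∨ 0 < A1 i j)
    (n : E → ℕ) (u : T → ℕ)
    (hnfull : ∀ j : E, (∃ i, 0 < A0 i j ∨ 0 < A1 i j) ↔ 0 < n j)
    (hufull : ∀ i : T, (∃ j, 0 < A0 i j ∨ 0 < A1 i j) ↔ 0 < u i)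
    (hcons : ∀ i : T, ∑ j, A0 i j * n j = ∑ j, A1 i j * n j)
    (hcyc : ∀ j : E, ∑ i, A0 i j * u i = ∑ i, A1 i j * u i) :
    ∀ i : T, (∃ j, 0 < A0 i j ∨ 0 < A1 i j) →
      Relation.TransGen (sysStep A0 A1) (Sum.inr i) (Sum.inr i) :=
  stmt_4_general A0 A1 n u hnfull hufull hcons hcyc
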